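/- Let A be a finite dimensional self-injective algebra over a field and P → M a projective resolution of a finitely generated A-module M by finitely generated projectives. Then P is a minimal complex (every homotopy equivalence P → P is an isomorphism) if and only if for every n ≥ 0 the map P_n → Coker(d_{n+1}) is a projective cover. -/

import Mathlib

open CategoryTheory

/-- A surjective linear map from a projective module whose kernel is superfluous,
i.e. a projective cover. -/
def IsProjectiveCover (A : Type) [Ring A] {P N : Type} [AddCommGroup P] [Module A P]
    [AddCommGroup N] [Module A N] (π : P →ₗ[A] N) : Prop :=
  Module.Projective A P ∧ Function.Surjective π ∧
    ∀ K : Submodule A P, K ⊔ LinearMap.ker π = ⊤ → K = ⊤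

/-!
For a chain map `g` with a homotopy `h` from `g` to `𝟙`, every `x` equals `g x - d h x - h d x`.
When all `im d` are superfluous, so are the images of both correction terms, hence `g` is
surjective in each degree, and bijective because the terms are Noetherian. Conversely, if
`K + im d = P n`, lift `P n → P n ⧸ K` through `d` to get `φ`; then `1 - d φ` maps `P n` into `K`,
and it is the degree-`n` component of a chain map homotopic to `𝟙`, hence an isomorphism when `P`
is minimal, so `K = P n`.
-/

namespace Submodule

variable {R M N : Type*} [Ring R] [AddCommGroup M] [Module R M] [AddCommGroup N] [Module R N]

def IsSuperfluous (S : Submodule R M) : Prop :=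
  ∀ K : Submodule R M, K ⊔ S = ⊤ → K = ⊤

theorem isSuperfluous_bot : (⊥ : Submodule R M).IsSuperfluous := fun K hK => by
  rwa [sup_bot_eq] at hK

theorem IsSuperfluous.mono {S T : Submodule R M} (hS : S.IsSuperfluous) (hTS : T ≤ S) :
    T.IsSuperfluous := fun K hK =>
  hS K (top_unique (hK ▸ sup_le_sup_left hTS K))

theorem IsSuperfluous.sup {S T : Submodule R M} (hS : S.IsSuperfluous) (hT : T.IsSuperfluous) :
    (S ⊔ T).IsSuperfluous := fun K hK =>
  hS K (hT _ (by rwa [sup_assoc]))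

theorem IsSuperfluous.map {S : Submodule R M} (hS : S.IsSuperfluous) (f : M →ₗ[R] N) :
    (S.map f).IsSuperfluous := by
  intro K hK
  have hcomap : K.comap f ⊔ S = ⊤ := by
    refine eq_top_iff.2 fun x _ => ?_
    obtain ⟨y, hy, _, ⟨s, hs, rfl⟩, hys⟩ := mem_sup.1 (hK ▸ mem_top : f x ∈ K ⊔ S.map f)
    exact mem_sup.2 ⟨x - s, by simpa [← hys] using hy, s, hs, sub_add_cancel x s⟩
  have hSK : S.map f ≤ K := map_le_iff_le_comap.2 (hS _ hcomap ▸ le_top)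
  rwa [sup_eq_left.2 hSK] at hK

end Submodule

theorem isProjectiveCover_mkQ_iff {A P : Type} [Ring A] [AddCommGroup P] [Module A P]
    [Module.Projective A P] (S : Submodule A P) : IsProjectiveCover A S.mkQ ↔ S.IsSuperfluous := by
  simp [IsProjectiveCover, Submodule.IsSuperfluous, Submodule.mkQ_surjective,
    ‹Module.Projective A P›]

section Homotopy

variable {V : Type*} [Category V] [Preadditive V]

theorem forall_isIso_homotopyEquiv_hom_iff {ι : Type*} {c : ComplexShape ι}
    (C : HomologicalComplex V c) :
    (∀ e : HomotopyEquiv C C, IsIso e.hom) ↔ ∀ g : C ⟶ C, Homotopy g (𝟙 C) → IsIso g := by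
  refine ⟨fun h g H => h
    { hom := g
      inv := 𝟙 C
      homotopyHomInvId := (Homotopy.ofEq (Category.comp_id g)).trans H
      homotopyInvHomId := (Homotopy.ofEq (Category.id_comp g)).trans H }, fun h e => ?_⟩
  have : IsIso (e.hom ≫ e.inv) := h _ e.homotopyHomInvId
  have : IsIso (e.inv ≫ e.hom) := h _ e.homotopyInvHomId
  have : IsSplitMono e.hom :=
    .mk' ⟨e.inv ≫ inv (e.hom ≫ e.inv), by rw [← Category.assoc, IsIso.hom_inv_id]⟩
  have : IsSplitEpi e.hom :=
    .mk' ⟨inv (e.inv ≫ e.hom) ≫ e.inv, by rw [Category.assoc, IsIso.inv_hom_id]⟩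
  exact isIso_of_epi_of_isSplitMono e.hom

theorem ChainComplex.exists_homotopy_id_f_eq_add (C : ChainComplex V ℕ) (n : ℕ)
    (φ : C.X n ⟶ C.X (n + 1)) :
    ∃ g : C ⟶ C, Nonempty (Homotopy g (𝟙 C)) ∧ g.f n = 𝟙 _ + φ ≫ C.d (n + 1) n := by
  let hom : ∀ i j, C.X i ⟶ C.X j := fun i j =>
    if h : i = n ∧ j = n + 1 then eqToHom (by rw [h.1]) ≫ φ ≫ eqToHom (by rw [h.2]) else 0
  have hom_eq_zero : ∀ i j, ¬ (ComplexShape.down ℕ).Rel j i → hom i j = 0 := by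
    intro i j hij
    exact dif_neg (by rintro ⟨rfl, rfl⟩; exact hij rfl)
  have hprev : prevD n hom = φ ≫ C.d (n + 1) n := by
    rw [prevD_eq hom rfl]
    simp [hom]
  have hnext : dNext n hom = 0 := by
    rw [dNext_nat]
    simp [hom]
  refine ⟨𝟙 C + Homotopy.nullHomotopicMap hom,
    ⟨((Homotopy.refl _).add (Homotopy.nullHomotopy hom hom_eq_zero)).trans
      (Homotopy.ofEq (add_zero _))⟩, ?_⟩
  change 𝟙 _ + (dNext n hom + prevD n hom) = _
  rw [hnext, hprev, zero_add]

end Homotopy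

namespace ChainComplex

variable {A : Type*} [Ring A] {C : ChainComplex (ModuleCat A) ℕ}

open LinearMap in
theorem isSuperfluous_range_d_of_forall_homotopy_id_isIso
    (hC : ∀ g : C ⟶ C, Homotopy g (𝟙 C) → IsIso g) (n : ℕ) [Module.Projective A (C.X n)] :
    (range (C.d (n + 1) n).hom).IsSuperfluous := by
  intro K hK
  have hsurj : Function.Surjective (K.mkQ ∘ₗ (C.d (n + 1) n).hom) :=
    range_eq_top.1 (by rw [range_comp, Submodule.map_mkQ_eq_top, hK])
  obtain ⟨φ, hφ⟩ := Module.projective_lifting_property _ K.mkQ hsurj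
  obtain ⟨g, ⟨H⟩, hg⟩ := C.exists_homotopy_id_f_eq_add n (ModuleCat.ofHom (-φ))
  have hgK : ∀ x, g.f n x ∈ K := fun x => by
    have := congr($hφ x)
    simp only [LinearMap.comp_apply, Submodule.mkQ_apply, Submodule.Quotient.eq] at this
    simpa [hg, ← sub_eq_add_neg] using K.neg_mem this
  have : IsIso g := hC g H
  have hg_surj := ((ConcreteCategory.isIso_iff_bijective (g.f n)).1 inferInstance).2
  exact eq_top_iff.2 fun y _ => by
    obtain ⟨x, rfl⟩ := hg_surj y
    exact hgK x

theorem isSuperfluous_range_prevD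
    (hC : ∀ n, (LinearMap.range (C.d (n + 1) n).hom).IsSuperfluous)
    (h : ∀ i j, C.X i ⟶ C.X j) (n : ℕ) : (LinearMap.range (prevD n h).hom).IsSuperfluous := by
  rw [prevD_eq h rfl, ModuleCat.hom_comp]
  exact (hC n).mono (LinearMap.range_comp_le_range _ _)

theorem isSuperfluous_range_dNext
    (hC : ∀ n, (LinearMap.range (C.d (n + 1) n).hom).IsSuperfluous)
    (h : ∀ i j, C.X i ⟶ C.X j) (n : ℕ) : (LinearMap.range (dNext n h).hom).IsSuperfluous := by
  cases n with
  | zero =>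
    rw [dNext_eq_zero h 0 (by simp), ModuleCat.hom_zero, LinearMap.range_zero]
    exact Submodule.isSuperfluous_bot
  | succ i =>
    rw [dNext_eq h rfl, ModuleCat.hom_comp, LinearMap.range_comp]
    exact (hC i).map _

theorem surjective_f_of_homotopy_id
    (hC : ∀ n, (LinearMap.range (C.d (n + 1) n).hom).IsSuperfluous)
    {g : C ⟶ C} (H : Homotopy g (𝟙 C)) (n : ℕ) : Function.Surjective (g.f n) := by
  have hsup : LinearMap.range (g.f n).hom ⊔
      (LinearMap.range (prevD n H.hom).hom ⊔ LinearMap.range (dNext n H.hom).hom) = ⊤ := by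
    refine eq_top_iff.2 fun x _ => Submodule.mem_sup.2 ⟨g.f n x, ⟨x, rfl⟩,
      -(prevD n H.hom x + dNext n H.hom x), ?_, ?_⟩
    · exact Submodule.neg_mem _ (Submodule.add_mem_sup ⟨x, rfl⟩ ⟨x, rfl⟩)
    · have hx : g.f n x = dNext n H.hom x + prevD n H.hom x + x := congr($(H.comm n) x)
      rw [hx]
      abel
  exact LinearMap.range_eq_top.1 <|
    ((isSuperfluous_range_prevD hC _ n).sup (isSuperfluous_range_dNext hC _ n)) _ hsup

theorem isIso_of_homotopy_id [∀ n, IsNoetherian A (C.X n)]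
    (hC : ∀ n, (LinearMap.range (C.d (n + 1) n).hom).IsSuperfluous)
    {g : C ⟶ C} (H : Homotopy g (𝟙 C)) : IsIso g := by
  have (n : ℕ) : IsIso (g.f n) := (ConcreteCategory.isIso_iff_bijective _).2
    ⟨IsNoetherian.injective_of_surjective_endomorphism _ (surjective_f_of_homotopy_id hC H n),
      surjective_f_of_homotopy_id hC H n⟩
  exact HomologicalComplex.Hom.isIso_of_components g

end ChainComplex

theorem minimal_projective_resolution_iff_projective_covers_general
    (k A : Type) [Field k] [Ring A] [Algebra k A] [FiniteDimensional k A]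
    (M : ModuleCat A)
    (P : ProjectiveResolution M)
    (hfg : ∀ n : ℕ, Module.Finite A (P.complex.X n)) :
    (∀ e : HomotopyEquiv P.complex P.complex, IsIso e.hom) ↔
      (∀ n : ℕ, IsProjectiveCover A
        (Submodule.mkQ (LinearMap.range (P.complex.d (n + 1) n).hom))) := by
  have (n : ℕ) : Module.Projective A (P.complex.X n) :=
    (IsProjective.iff_projective _).mpr (P.projective n)
  have : IsNoetherianRing A := IsNoetherianRing.of_finite k A
  have (n : ℕ) : IsNoetherian A (P.complex.X n) := by
    have := hfg n
    infer_instance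
  simp only [isProjectiveCover_mkQ_iff, forall_isIso_homotopyEquiv_hom_iff]
  exact ⟨fun hmin n => ChainComplex.isSuperfluous_range_d_of_forall_homotopy_id_isIso hmin n,
    fun hC _ => ChainComplex.isIso_of_homotopy_id hC⟩

/-- Let `A` be a finite dimensional self-injective algebra over a field `k`
and `P → M` a projective resolution of a finitely generated `A`-module `M` by finitely
generated projectives.  Then `P` is a minimal complex (every homotopy equivalence
`P → P` is an isomorphism) iff for every `n ≥ 0` the canonical map
`P n → Coker (d (n+1))` is a projective cover. -/
theorem minimal_projective_resolution_iff_projective_covers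
    (k A : Type) [Field k] [Ring A] [Algebra k A] [FiniteDimensional k A]
    (hselfinj : Module.Injective A A)
    (M : ModuleCat A) (hM : Module.Finite A M)
    (P : ProjectiveResolution M)
    (hfg : ∀ n : ℕ, Module.Finite A (P.complex.X n)) :
    (∀ e : HomotopyEquiv P.complex P.complex, IsIso e.hom) ↔
      (∀ n : ℕ, IsProjectiveCover A
        (Submodule.mkQ (LinearMap.range (P.complex.d (n + 1) n).hom))) :=
  minimal_projective_resolution_iff_projective_covers_general k A M P hfg
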